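/- arXiv:1708.09660 — 5 statements merged into one kernel-verified Lean document; each statement's English description precedes it below -/
import Mathlib

section
/- Let T₁, T₂, T₃, T₄ : I → Mₙ(ℂ) be differentiable and satisfy the full Nahm equations, let x ∈ ℝ³ with r² ≠ 0, and suppose Q(z) is invertible for every z ∈ I. Then d(Q⁻¹)/dz − [1₂⊗T₄, Q⁻¹] − (H+F)Q⁻¹ − Q⁻¹(H+F) = 1_{2n} on I. -/
open Matrix Kronecker

noncomputable section

attribute [local instance] Matrix.normedAddCommGroup Matrix.normedSpace

/-- n×n complex matrices. -/
abbrev Mat (n : ℕ) := Matrix (Fin n) (Fin n) ℂ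

/-- The Levi-Civita symbol on `Fin 3`, valued in `ℂ`. -/
def lev (i j k : Fin 3) : ℂ :=
  ((j.val : ℂ) - i.val) * ((k.val : ℂ) - j.val) * ((k.val : ℂ) - i.val) / 2

/-- The right-hand side of the full Nahm equations:
`[T₄, Tᵢ] + (1/2)·Σ_{j,k} ε_{ijk} [T_j, T_k]`. -/
def nahmRHS {n : ℕ} (T : Fin 3 → ℝ → Mat n) (T4 : ℝ → Mat n) (i : Fin 3) (z : ℝ) : Mat n :=
  (T4 z * T i z - T i z * T4 z) +
    (1 / 2 : ℂ) • ∑ j : Fin 3, ∑ k : Fin 3, lev i j k • (T j z * T k z - T k z * T j z)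

/-- 2n×2n complex matrices, indexed by `Fin 2 × Fin n`. -/
abbrev Mat2 (n : ℕ) := Matrix (Fin 2 × Fin n) (Fin 2 × Fin n) ℂ

/-- The Pauli matrices. -/
def σ : Fin 3 → Matrix (Fin 2) (Fin 2) ℂ :=
  ![!![0, 1; 1, 0], !![0, -Complex.I; Complex.I, 0], !![1, 0; 0, -1]]

/-- `r² = x₁² + x₂² + x₃²`. -/
def r2 (x : Fin 3 → ℝ) : ℝ := ∑ j : Fin 3, x j ^ 2

/-- `H = −Σ_j x_j σ_j ⊗ 1ₙ`. -/
def Hmat (n : ℕ) (x : Fin 3 → ℝ) : Mat2 n :=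
  -∑ j : Fin 3, (x j : ℂ) • (σ j ⊗ₖ (1 : Mat n))

/-- `F(z) = i·Σ_j σ_j ⊗ T_j(z)`. -/
def Fmat {n : ℕ} (T : Fin 3 → ℝ → Mat n) (z : ℝ) : Mat2 n :=
  Complex.I • ∑ j : Fin 3, σ j ⊗ₖ T j z

/-- `Q(z) = (1/r²)·H·F(z)·H − F(z)`. -/
def Qmat {n : ℕ} (x : Fin 3 → ℝ) (T : Fin 3 → ℝ → Mat n) (z : ℝ) : Mat2 n :=
  ((r2 x : ℂ))⁻¹ • (Hmat n x * Fmat T z * Hmat n x) - Fmat T z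

/-! Since `H² = r²`, `Q = H⁻¹ F H - F`. By the Pauli relations `σⱼσₖ = δⱼₖ + i εⱼₖₗ σₗ`, the Nahm
equations say exactly that `F' = [1 ⊗ T₄, F] - F² - 1 ⊗ Σⱼ Tⱼ²`, and both `1 ⊗ T₄` and the last term
commute with `H`. Conjugating by `H` shows that `Q` solves the Riccati equation
`Q' = [1 ⊗ T₄, Q] - (H + F) Q - Q (H + F) - Q²`, and `(Q⁻¹)' = -Q⁻¹ Q' Q⁻¹` turns it into the
claimed equation for `Q⁻¹`. -/

section MatrixCalculus

open Filter Topology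

variable {𝕜 l m ι κ : Type*} [RCLike 𝕜] [Fintype l] [Fintype m]
  {f : ℝ → Matrix m m 𝕜} {f' : Matrix m m 𝕜} {z : ℝ}

theorem HasDerivAt.matrix_inv [DecidableEq m] (hf : HasDerivAt f f' z) (hz : IsUnit (f z)) :
    HasDerivAt (fun w => (f w)⁻¹) (-((f z)⁻¹ * f' * (f z)⁻¹)) z := by
  have hdet : (f z).det ≠ 0 := ((isUnit_iff_isUnit_det _).1 hz).ne_zero
  have hdet_cont : ContinuousAt (fun w => (f w).det) z :=
    (continuous_id.matrix_det.continuousAt).comp hf.continuousAt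
  have hinv_cont : ContinuousAt (fun w => (f w)⁻¹) z :=
    (continuousAt_matrix_inv _ (by rw [Ring.inverse_eq_inv']; exact continuousAt_inv₀ hdet)).comp
      hf.continuousAt
  have hslope : ∀ᶠ w in 𝓝[≠] z,
      -((f w)⁻¹ * slope f z w * (f z)⁻¹) = slope (fun w => (f w)⁻¹) z w := by
    filter_upwards [nhdsWithin_le_nhds (hdet_cont.eventually_ne hdet)] with w hw
    have hRw : (f w)⁻¹ * f w = 1 := nonsing_inv_mul _ (isUnit_iff_ne_zero.2 hw)
    have hRz : f z * (f z)⁻¹ = 1 := mul_nonsing_inv _ (isUnit_iff_ne_zero.2 hdet)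
    rw [slope_def_module, slope_def_module, mul_smul_comm, smul_mul_assoc, ← smul_neg]
    congr 1
    rw [mul_sub, sub_mul, hRw, one_mul, mul_assoc, hRz, mul_one, neg_sub]
  refine hasDerivAt_iff_tendsto_slope.2 (Tendsto.congr' hslope ?_)
  exact (((hinv_cont.tendsto.mono_left nhdsWithin_le_nhds).mul
    (hasDerivAt_iff_tendsto_slope.1 hf)).mul_const _).neg

theorem HasDerivAt.const_kronecker [Fintype ι] [Fintype κ] (A : Matrix ι κ 𝕜)
    {g : ℝ → Matrix l m 𝕜} {g' : Matrix l m 𝕜} (hg : HasDerivAt g g' z) :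
    HasDerivAt (fun w => A ⊗ₖ g w) (A ⊗ₖ g') z :=
  (((kroneckerBilinear (R := 𝕜) A).toContinuousLinearMap.restrictScalars ℝ).hasFDerivAt
    |>.comp_hasDerivAt z hg :)

theorem HasDerivAt.const_mul_mul_const (A B : Matrix m m 𝕜) (hf : HasDerivAt f f' z) :
    HasDerivAt (fun w => A * f w * B) (A * f' * B) z :=
  ((LinearMap.mulLeftRight 𝕜 (A, B)).toContinuousLinearMap.restrictScalars ℝ).hasFDerivAt
    |>.comp_hasDerivAt z hf

end MatrixCalculus

section Pauli

open Complex

theorem Matrix.kronecker_sub {α l m n p : Type*} [Ring α] (A : Matrix l m α) (B C : Matrix n p α) :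
    A ⊗ₖ (B - C) = A ⊗ₖ B - A ⊗ₖ C := by
  ext; simp [mul_sub]

theorem lev_swap (i j k : Fin 3) : lev i k j = -lev i j k := by
  simp only [lev]; ring

theorem sum_lev_smul_mul_eq_half_commutator {R : Type*} [Ring R] [Module ℂ R]
    (A : Fin 3 → R) (i : Fin 3) :
    ∑ j, ∑ k, lev i j k • (A j * A k) =
      (1 / 2 : ℂ) • ∑ j, ∑ k, lev i j k • (A j * A k - A k * A j) := by
  have hswap : ∑ j, ∑ k, lev i j k • (A k * A j) = -∑ j, ∑ k, lev i j k • (A j * A k) := by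
    rw [Finset.sum_comm, ← Finset.sum_neg_distrib]
    refine Finset.sum_congr rfl fun j _ => ?_
    rw [← Finset.sum_neg_distrib]
    refine Finset.sum_congr rfl fun k _ => ?_
    rw [lev_swap, neg_smul]
  simp only [smul_sub, Finset.sum_sub_distrib, hswap]
  module

theorem pauli_mul_pauli :
    (σ 0 * σ 0 = 1 ∧ σ 1 * σ 1 = 1 ∧ σ 2 * σ 2 = 1) ∧
    (σ 0 * σ 1 = I • σ 2 ∧ σ 1 * σ 2 = I • σ 0 ∧ σ 2 * σ 0 = I • σ 1) ∧
    (σ 1 * σ 0 = (-I) • σ 2 ∧ σ 2 * σ 1 = (-I) • σ 0 ∧ σ 0 * σ 2 = (-I) • σ 1) := by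
  refine ⟨⟨?_, ?_, ?_⟩, ⟨?_, ?_, ?_⟩, ⟨?_, ?_, ?_⟩⟩ <;>
    · ext i j
      fin_cases i <;> fin_cases j <;>
        simp [σ, Matrix.mul_apply, Fin.sum_univ_two]

theorem pauli_kronecker_sum_mul {ι : Type*} [Fintype ι] [DecidableEq ι]
    (A B : Fin 3 → Matrix ι ι ℂ) :
    (∑ j, σ j ⊗ₖ A j) * (∑ k, σ k ⊗ₖ B k) =
      1 ⊗ₖ ∑ j, A j * B j + I • ∑ i, σ i ⊗ₖ ∑ j, ∑ k, lev i j k • (A j * B k) := by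
  obtain ⟨⟨h00, h11, h22⟩, ⟨h01, h12, h20⟩, ⟨h10, h21, h02⟩⟩ := pauli_mul_pauli
  simp only [Fin.sum_univ_three, add_mul, mul_add, ← mul_kronecker_mul, h00, h11, h22, h01, h12,
    h20, h10, h21, h02, smul_kronecker, kronecker_add, kronecker_smul]
  simp [lev]
  module

end Pauli

section Riccati

variable {A : Type*} [Ring A]

theorem conj_sub_riccati {H K t G : A} (F : A) (hKH : K * H = 1) (hHK : H * K = 1)
    (hHHF : Commute (H * H) F) (htH : Commute t H) (hGH : Commute G H) :
    K * (t * F - F * t - F * F - G) * H - (t * F - F * t - F * F - G) =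
      t * (K * F * H - F) - (K * F * H - F) * t - (H + F) * (K * F * H - F)
        - (K * F * H - F) * (H + F) - (K * F * H - F) * (K * F * H - F) := by
  have htK : Commute t K := htH.units_inv_right (u := ⟨H, K, hHK, hKH⟩)
  set P := K * F * H with hP
  have hKtF : K * (t * F) * H = t * P := by simp only [hP, ← mul_assoc, ← htK.eq]
  have hKFt : K * (F * t) * H = P * t := by simp only [hP, mul_assoc, htH.eq]
  have hKFF : K * (F * F) * H = P * P := by
    simp only [hP, mul_assoc]
    rw [← mul_assoc H K, hHK, one_mul]
  have hKG : K * G * H = G := by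
    rw [mul_assoc, hGH.eq, ← mul_assoc, hKH, one_mul]
  have hHP : H * P = F * H := by simp only [hP, ← mul_assoc, hHK, one_mul]
  have hPH : P * H = H * F := by
    rw [hP, mul_assoc, mul_assoc, ← hHHF.eq]
    simp only [← mul_assoc, hKH, one_mul]
  simp only [mul_sub, sub_mul, mul_add, add_mul, hKtF, hKFt, hKFF, hKG, hHP, hPH]
  abel

theorem inv_riccati {Q R Q' t M : A} (hRQ : R * Q = 1) (hQR : Q * R = 1)
    (hQ' : Q' = t * Q - Q * t - M * Q - Q * M - Q * Q) :
    -(R * Q' * R) - (t * R - R * t) - M * R - R * M = 1 := by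
  have hRQ' : ∀ X, R * (Q * X) = X := fun X => by rw [← mul_assoc, hRQ, one_mul]
  simp only [hQ', mul_sub, sub_mul, mul_assoc, hRQ', hQR, mul_one]
  abel

end Riccati

section Nahm

open Complex

variable {n : ℕ}

theorem Hmat_eq_kronecker (x : Fin 3 → ℝ) :
    Hmat n x = (-∑ j, (x j : ℂ) • σ j) ⊗ₖ (1 : Mat n) := by
  ext ⟨a, i⟩ ⟨b, j⟩
  simp [Hmat, Matrix.sum_apply, Finset.sum_mul, mul_assoc]

theorem Hmat_mul_self (x : Fin 3 → ℝ) : Hmat n x * Hmat n x = (r2 x : ℂ) • 1 := by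
  have hS : (-∑ j, (x j : ℂ) • σ j) * (-∑ j, (x j : ℂ) • σ j) = (r2 x : ℂ) • 1 := by
    ext a b
    fin_cases a <;> fin_cases b <;>
      simp [σ, r2, Fin.sum_univ_three, Matrix.mul_apply, Fin.sum_univ_two] <;>
      ring_nf <;> simp
  rw [Hmat_eq_kronecker, ← mul_kronecker_mul, hS, one_mul, smul_kronecker, one_kronecker_one]

theorem Hmat_commute_one_kronecker (x : Fin 3 → ℝ) (M : Mat n) :
    Commute (Hmat n x) (1 ⊗ₖ M) := by
  rw [Hmat_eq_kronecker, Commute, SemiconjBy, ← mul_kronecker_mul, ← mul_kronecker_mul]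
  simp

theorem one_kronecker_commutator {ι : Type*} [Fintype ι] (S : Matrix (Fin 2) (Fin 2) ℂ)
    (M X : Matrix ι ι ℂ) :
    (1 ⊗ₖ M) * (S ⊗ₖ X) - (S ⊗ₖ X) * (1 ⊗ₖ M) = S ⊗ₖ (M * X - X * M) := by
  rw [← mul_kronecker_mul, ← mul_kronecker_mul, one_mul, mul_one, kronecker_sub]

theorem smul_sum_pauli_kronecker_nahmRHS (T : Fin 3 → ℝ → Mat n) (T4 : ℝ → Mat n) (z : ℝ) :
    I • ∑ i, σ i ⊗ₖ nahmRHS T T4 i z =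
      (1 ⊗ₖ T4 z) * Fmat T z - Fmat T z * (1 ⊗ₖ T4 z) - Fmat T z * Fmat T z
        - 1 ⊗ₖ ∑ j, T j z * T j z := by
  have hcomm : (1 ⊗ₖ T4 z) * Fmat T z - Fmat T z * (1 ⊗ₖ T4 z) =
      I • ∑ i, σ i ⊗ₖ (T4 z * T i z - T i z * T4 z) := by
    simp only [Fmat, mul_smul_comm, smul_mul_assoc, ← smul_sub, Finset.mul_sum, Finset.sum_mul,
      ← Finset.sum_sub_distrib, one_kronecker_commutator]
  have hsq : Fmat T z * Fmat T z = -(1 ⊗ₖ ∑ j, T j z * T j z) -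
      I • ∑ i, σ i ⊗ₖ ((1 / 2 : ℂ) • ∑ j, ∑ k, lev i j k • (T j z * T k z - T k z * T j z)) := by
    simp only [Fmat, smul_mul_smul_comm, I_mul_I, pauli_kronecker_sum_mul,
      sum_lev_smul_mul_eq_half_commutator]
    module
  simp only [nahmRHS, kronecker_add, Finset.sum_add_distrib, smul_add, hcomm, hsq]
  abel

theorem hasDerivAt_Fmat {T : Fin 3 → ℝ → Mat n} {T4 : ℝ → Mat n} {z : ℝ}
    (hT : ∀ i, HasDerivAt (T i) (nahmRHS T T4 i z) z) :
    HasDerivAt (Fmat T)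
      ((1 ⊗ₖ T4 z) * Fmat T z - Fmat T z * (1 ⊗ₖ T4 z) - Fmat T z * Fmat T z
        - 1 ⊗ₖ ∑ j, T j z * T j z) z := by
  rw [← smul_sum_pauli_kronecker_nahmRHS]
  exact (HasDerivAt.fun_sum fun i _ => (hT i).const_kronecker (σ i)).const_smul I

theorem hasDerivAt_Qmat {x : Fin 3 → ℝ} (hx : r2 x ≠ 0) {T : Fin 3 → ℝ → Mat n}
    {T4 : ℝ → Mat n} {z : ℝ} (hT : ∀ i, HasDerivAt (T i) (nahmRHS T T4 i z) z) :
    HasDerivAt (Qmat x T)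
      ((1 ⊗ₖ T4 z) * Qmat x T z - Qmat x T z * (1 ⊗ₖ T4 z)
        - (Hmat n x + Fmat T z) * Qmat x T z - Qmat x T z * (Hmat n x + Fmat T z)
        - Qmat x T z * Qmat x T z) z := by
  set H := Hmat n x
  set K := (r2 x : ℂ)⁻¹ • H
  have hρ : (r2 x : ℂ) ≠ 0 := ofReal_ne_zero.2 hx
  have hKH : K * H = 1 := by
    rw [smul_mul_assoc, Hmat_mul_self, smul_smul, inv_mul_cancel₀ hρ, one_smul]
  have hHK : H * K = 1 := by
    rw [mul_smul_comm, Hmat_mul_self, smul_smul, inv_mul_cancel₀ hρ, one_smul]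
  have hHHF : Commute (H * H) (Fmat T z) := by
    rw [Hmat_mul_self]
    exact (Commute.one_left _).smul_left _
  have hQ : Qmat x T = fun w => K * Fmat T w * H - Fmat T w :=
    funext fun w => by rw [Qmat, smul_mul_assoc, smul_mul_assoc]
  have hF := hasDerivAt_Fmat hT
  rw [hQ, ← conj_sub_riccati (Fmat T z) hKH hHK hHHF (Hmat_commute_one_kronecker x (T4 z)).symm
    (Hmat_commute_one_kronecker x _).symm]
  exact (hF.const_mul_mul_const K H).sub hF

end Nahm

theorem Qinv_identity_general {n : ℕ} (I : Set ℝ) (T1 T2 T3 T4 : ℝ → Mat n)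
    (hnahm : ∀ z ∈ I, ∀ i : Fin 3,
      HasDerivAt (![T1, T2, T3] i) (nahmRHS ![T1, T2, T3] T4 i z) z)
    (x : Fin 3 → ℝ) (hx : r2 x ≠ 0)
    (hQ : ∀ z ∈ I, IsUnit (Qmat x ![T1, T2, T3] z)) :
    let T : Fin 3 → ℝ → Mat n := ![T1, T2, T3]
    let H : Mat2 n := Hmat n x
    let T4h : ℝ → Mat2 n := fun z => (1 : Matrix (Fin 2) (Fin 2) ℂ) ⊗ₖ T4 z
    ∀ z ∈ I, ∃ Q' : Mat2 n,
      HasDerivAt (fun w => (Qmat x T w)⁻¹) Q' z ∧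
      Q' - (T4h z * (Qmat x T z)⁻¹ - (Qmat x T z)⁻¹ * T4h z)
          - (H + Fmat T z) * (Qmat x T z)⁻¹ - (Qmat x T z)⁻¹ * (H + Fmat T z)
        = (1 : Mat2 n) := by
  intro T H T4h z hz
  have hQ' := hasDerivAt_Qmat hx (hnahm z hz)
  have hdet : IsUnit (Qmat x T z).det := (isUnit_iff_isUnit_det _).1 (hQ z hz)
  exact ⟨_, hQ'.matrix_inv (hQ z hz),
    inv_riccati (nonsing_inv_mul _ hdet) (mul_nonsing_inv _ hdet) rfl⟩

/-- Panagopoulos, Proposition `panagopo1`: with Nahm data satisfying the full Nahm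
equations, `x ∈ ℝ³` with `r² ≠ 0`, and `Q(z)` invertible on `I`, one has
`d(Q⁻¹)/dz − [1₂⊗T₄, Q⁻¹] − (H+F)Q⁻¹ − Q⁻¹(H+F) = 1_{2n}` on `I`. -/
theorem Qinv_identity {n : ℕ} (I : Set ℝ) (T1 T2 T3 T4 : ℝ → Mat n)
    (hd4 : ∀ z ∈ I, DifferentiableAt ℝ T4 z)
    (hnahm : ∀ z ∈ I, ∀ i : Fin 3,
      HasDerivAt (![T1, T2, T3] i) (nahmRHS ![T1, T2, T3] T4 i z) z)
    (x : Fin 3 → ℝ) (hx : r2 x ≠ 0)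
    (hQ : ∀ z ∈ I, IsUnit (Qmat x ![T1, T2, T3] z)) :
    let T : Fin 3 → ℝ → Mat n := ![T1, T2, T3]
    let H : Mat2 n := Hmat n x
    let T4h : ℝ → Mat2 n := fun z => (1 : Matrix (Fin 2) (Fin 2) ℂ) ⊗ₖ T4 z
    ∀ z ∈ I, ∃ Q' : Mat2 n,
      HasDerivAt (fun w => (Qmat x T w)⁻¹) Q' z ∧
      Q' - (T4h z * (Qmat x T z)⁻¹ - (Qmat x T z)⁻¹ * T4h z)
          - (H + Fmat T z) * (Qmat x T z)⁻¹ - (Qmat x T z)⁻¹ * (H + Fmat T z)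
        = (1 : Mat2 n) :=
  Qinv_identity_general I T1 T2 T3 T4 hnahm x hx hQ
end
end

section
/- (Nahm's ansatz.) Let T₁, T₂, T₃, T₄ : I → Mₙ(ℂ) be differentiable, x = (x₁,x₂,x₃) ∈ ℝ³, x₄ ∈ ℝ, ζ ∈ ℂ. Set û(ζ) = (i(ζ−ζ̄), ζ+ζ̄, 1−|ζ|²)/(1+|ζ|²) ∈ ℝ³, η = (x₂−ix₁) − 2x₃ζ − (x₂+ix₁)ζ², L(ζ) = (T₁+iT₂) − 2iT₃ζ + (T₁−iT₂)ζ² and M(ζ) = −T₄ − iT₃ + (T₁−iT₂)ζ. Let s ∈ ℂ² with (1₂ + û·σ)s ≠ 0, let U : I → ℂⁿ be differentiable, and define w(z) = exp(−iz[(x₁−ix₂)ζ − ix₃ − x₄]) · [(1₂+û·σ)s] ⊗ U(z) ∈ ℂ^{2n}. Then Δw = 0 on I if and only if (L(ζ) − η·1ₙ)U(z) = 0 and dU/dz + M(ζ)U(z) = 0 for all z ∈ I. -/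
open Matrix Kronecker

noncomputable section

attribute [local instance] Matrix.normedAddCommGroup Matrix.normedSpace

open Complex ComplexConjugate

/-! The image of `1₂ + û(ζ)·σ` is the line spanned by `(1, iζ)`, so
`w = e(z)·A₀·(1, iζ) ⊗ U` with a plane-wave factor `e` and `A₀ ≠ 0`. In the upper component of
`Δw` the derivative of `e` cancels all the `x`-terms, leaving `i·e·A₀·(U' + M U)`; the lower
component is `e·A₀·((L − η)U − ζ(U' + M U))`. This system is triangular, so `Δw = 0` exactly
when both equations hold. -/

section Kronecker

variable {R l m p q : Type*} [CommSemiring R] [Fintype m] [Fintype q]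

theorem kronecker_mulVec_prod (B : Matrix l m R) (C : Matrix p q R) (a : m → R) (v : q → R) :
    (B ⊗ₖ C) *ᵥ (fun y => a y.1 * v y.2) = fun y => (B *ᵥ a) y.1 * (C *ᵥ v) y.2 := by
  ext ⟨i, k⟩
  simp only [mulVec, dotProduct, Fintype.sum_prod_type, kroneckerMap_apply, Finset.sum_mul_sum]
  exact Finset.sum_congr rfl fun j _ => Finset.sum_congr rfl fun l _ => by ring

end Kronecker

/-- `1₂ + û(ζ)·σ`. -/
def onePlusUσ (ζ : ℂ) : Matrix (Fin 2) (Fin 2) ℂ :=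
  1 + (1 + ζ * conj ζ)⁻¹ •
    ((I * (ζ - conj ζ)) • σ 0 + (ζ + conj ζ) • σ 1 + (1 - ζ * conj ζ) • σ 2)

theorem one_add_mul_conj_ne_zero (ζ : ℂ) : 1 + ζ * conj ζ ≠ 0 := by
  rw [mul_conj, ← ofReal_one, ← ofReal_add, ofReal_ne_zero]
  exact (add_pos_of_pos_of_nonneg one_pos (normSq_nonneg ζ)).ne'

theorem onePlusUσ_mulVec_one (ζ : ℂ) (s : Fin 2 → ℂ) :
    (onePlusUσ ζ *ᵥ s) 1 = I * ζ * (onePlusUσ ζ *ᵥ s) 0 := by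
  have hD := one_add_mul_conj_ne_zero ζ
  simp only [onePlusUσ, σ, mulVec, dotProduct, Fin.sum_univ_two, Matrix.add_apply, one_apply,
    of_apply, smul_of, smul_cons, smul_empty, of_add_of, add_cons, empty_add_empty, cons_val',
    cons_val_zero, cons_val_one, cons_val, cons_val_fin_one, head_cons, tail_cons, smul_eq_mul,
    mul_zero, mul_one, mul_neg, add_zero, zero_add, neg_sub, one_ne_zero, zero_ne_one, ↓reduceIte]
  field_simp
  linear_combination (2 * ζ * conj ζ * s 1) * I_sq

theorem apply_zero_ne_zero_of_apply_one_eq_mul {R : Type*} [MulZeroClass R] {A : Fin 2 → R}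
    {a : R} (hA : A 1 = a * A 0) (h : A ≠ 0) : A 0 ≠ 0 := by
  contrapose! h
  ext i
  fin_cases i <;> simp [h, hA]

theorem hasDerivAt_cexp_smul_prod {ι κ : Type*} [Fintype ι] [Fintype κ] (c : ℂ) (A : ι → ℂ)
    {U : ℝ → κ → ℂ} {U' : κ → ℂ} {z : ℝ} (hU : HasDerivAt U U' z) :
    HasDerivAt (fun t : ℝ => cexp (-I * t * c) • fun y : ι × κ => A y.1 * U t y.2)
      ((-I * c * cexp (-I * z * c)) • (fun y => A y.1 * U z y.2)
        + cexp (-I * z * c) • fun y => A y.1 * U' y.2) z := by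
  have hexp : HasDerivAt (fun t : ℝ => cexp (-I * t * c)) (cexp (-I * z * c) * (-I * 1 * c)) z :=
    ((((hasDerivAt_id z).ofReal_comp).const_mul (-I)).mul_const c).cexp
  have hprod : HasDerivAt (fun t : ℝ => fun y : ι × κ => A y.1 * U t y.2)
      (fun y => A y.1 * U' y.2) z :=
    hasDerivAt_pi.2 fun y => (hasDerivAt_pi.1 hU y.2).const_mul (A y.1)
  refine (hexp.smul hprod).congr_deriv ?_
  rw [add_comm, mul_one, mul_comm]

theorem fin_two_prod_triangular_eq_zero_iff {R κ : Type*} [DivisionRing R] {a : R} (ha : a ≠ 0)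
    (b : R) (P Q : κ → R) :
    (fun y : Fin 2 × κ => ![a • Q, P - b • Q] y.1 y.2) = 0 ↔ P = 0 ∧ Q = 0 := by
  constructor
  · intro h
    have hQ : Q = 0 :=
      (smul_eq_zero.1 (funext fun k => congrFun h (0, k) : a • Q = 0)).resolve_left ha
    have hP : P - b • Q = 0 := funext fun k => congrFun h (1, k)
    rw [hQ, smul_zero, sub_zero] at hP
    exact ⟨hP, hQ⟩
  · rintro ⟨rfl, rfl⟩
    ext ⟨i, k⟩
    fin_cases i <;> simp

section Dirac

variable {n : ℕ}

/-- The value of `Δw` at a point where `w` takes the value `w` and has derivative `w'`. -/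
def nahmDirac (T : Fin 3 → Mat n) (T4 : Mat n) (x : Fin 3 → ℝ) (x4 : ℝ)
    (w' w : Fin 2 × Fin n → ℂ) : Fin 2 × Fin n → ℂ :=
  I • w' + (x4 : ℂ) • w - I • (((1 : Matrix (Fin 2) (Fin 2) ℂ) ⊗ₖ T4) *ᵥ w)
    + (∑ j : Fin 3, σ j ⊗ₖ (T j + (I * (x j : ℂ)) • (1 : Mat n))) *ᵥ w

def nahmL (T : Fin 3 → Mat n) (ζ : ℂ) : Mat n :=
  (T 0 + I • T 1) - (2 * I * ζ) • T 2 + ζ ^ 2 • (T 0 - I • T 1)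

def nahmM (T : Fin 3 → Mat n) (T4 : Mat n) (ζ : ℂ) : Mat n :=
  -T4 - I • T 2 + ζ • (T 0 - I • T 1)

def nahmη (x : Fin 3 → ℝ) (ζ : ℂ) : ℂ :=
  ((x 1 : ℂ) - I * x 0) - 2 * (x 2 : ℂ) * ζ - ((x 1 : ℂ) + I * x 0) * ζ ^ 2

theorem nahmDirac_planeWave (T : Fin 3 → Mat n) (T4 : Mat n) (x : Fin 3 → ℝ) (x4 : ℝ)
    (ζ e : ℂ) {c : ℂ} (hc : c = ((x 0 : ℂ) - I * x 1) * ζ - I * x 2 - x4) {A : Fin 2 → ℂ}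
    (hA : A 1 = I * ζ * A 0) (u u' : Fin n → ℂ) :
    nahmDirac T T4 x x4
        ((-I * c * e) • (fun y => A y.1 * u y.2) + e • fun y => A y.1 * u' y.2)
        (e • fun y => A y.1 * u y.2)
      = (e * A 0) • fun y => ![I • (u' + nahmM T T4 ζ *ᵥ u),
          (nahmL T ζ - nahmη x ζ • 1) *ᵥ u - ζ • (u' + nahmM T T4 ζ *ᵥ u)] y.1 y.2 := by
  simp only [nahmDirac, Fin.sum_univ_three, add_mulVec, mulVec_smul, kronecker_mulVec_prod]
  ext ⟨i, k⟩
  fin_cases i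
  all_goals
    simp only [nahmL, nahmM, nahmη, hc, σ, hA, Fin.isValue, Fin.zero_eta, Fin.mk_one,
      Fin.succ_zero_eq_one, Nat.succ_eq_add_one, Nat.reduceAdd, Function.comp_apply, vecHead,
      vecTail, cons_val', cons_val_zero, cons_val_one, cons_val, cons_val_fin_one, cons_mulVec,
      cons_dotProduct, empty_mulVec, dotProduct_of_isEmpty, one_mulVec, add_mulVec, sub_mulVec,
      neg_mulVec, smul_mulVec, Pi.add_apply, Pi.sub_apply, Pi.neg_apply, Pi.smul_apply,
      smul_eq_mul, real_smul, coe_smul, smul_add, smul_neg, neg_smul, neg_mul, mul_neg, zero_mul,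
      one_mul, add_zero, zero_add]
    ring_nf
    simp only [I_sq, I_pow_three, I_pow_four]
    ring

theorem nahmDirac_planeWave_eq_zero_iff (T : Fin 3 → Mat n) (T4 : Mat n) (x : Fin 3 → ℝ)
    (x4 : ℝ) {ζ e c : ℂ} (hc : c = ((x 0 : ℂ) - I * x 1) * ζ - I * x 2 - x4) {A : Fin 2 → ℂ}
    (hA : A 1 = I * ζ * A 0) (hA0 : A 0 ≠ 0) (he : e ≠ 0) (u u' : Fin n → ℂ) :
    nahmDirac T T4 x x4
        ((-I * c * e) • (fun y => A y.1 * u y.2) + e • fun y => A y.1 * u' y.2)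
        (e • fun y => A y.1 * u y.2) = 0 ↔
      (nahmL T ζ - nahmη x ζ • 1) *ᵥ u = 0 ∧ u' + nahmM T T4 ζ *ᵥ u = 0 := by
  rw [nahmDirac_planeWave T T4 x x4 ζ e hc hA u u', smul_eq_zero_iff_right (mul_ne_zero he hA0)]
  exact fin_two_prod_triangular_eq_zero_iff I_ne_zero ζ _ _

end Dirac

theorem nahm_ansatz_general {n : ℕ} (I : Set ℝ) (T1 T2 T3 T4 : ℝ → Mat n)
    (x : Fin 3 → ℝ) (x4 : ℝ) (ζ : ℂ) (s : Fin 2 → ℂ)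
    (U U' : ℝ → Fin n → ℂ) (hU : ∀ z ∈ I, HasDerivAt U (U' z) z) :
    let uσ : Matrix (Fin 2) (Fin 2) ℂ :=
      (1 : Matrix (Fin 2) (Fin 2) ℂ) +
        (1 + ζ * (starRingEnd ℂ) ζ)⁻¹ •
          ((Complex.I * (ζ - (starRingEnd ℂ) ζ)) • σ 0
            + (ζ + (starRingEnd ℂ) ζ) • σ 1
            + (1 - ζ * (starRingEnd ℂ) ζ) • σ 2)
    let η : ℂ :=
      ((x 1 : ℂ) - Complex.I * x 0) - 2 * (x 2 : ℂ) * ζ - ((x 1 : ℂ) + Complex.I * x 0) * ζ ^ 2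
    let L : ℝ → Mat n := fun z =>
      (T1 z + Complex.I • T2 z) - (2 * Complex.I * ζ) • T3 z + ζ ^ 2 • (T1 z - Complex.I • T2 z)
    let M : ℝ → Mat n := fun z =>
      -T4 z - Complex.I • T3 z + ζ • (T1 z - Complex.I • T2 z)
    let w : ℝ → (Fin 2 × Fin n) → ℂ := fun z p =>
      Complex.exp (-Complex.I * z * (((x 0 : ℂ) - Complex.I * x 1) * ζ - Complex.I * x 2 - x4))
        * ((uσ *ᵥ s) p.1 * U z p.2)
    uσ *ᵥ s ≠ 0 →
    ((∀ z ∈ I, ∃ w' : (Fin 2 × Fin n) → ℂ, HasDerivAt w w' z ∧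
        Complex.I • w' + (x4 : ℂ) • w z
          - Complex.I • (((1 : Matrix (Fin 2) (Fin 2) ℂ) ⊗ₖ T4 z) *ᵥ w z)
          + (∑ j : Fin 3,
              σ j ⊗ₖ (![T1, T2, T3] j z + (Complex.I * (x j : ℂ)) • (1 : Mat n))) *ᵥ w z
        = 0) ↔
      (∀ z ∈ I, (L z - η • (1 : Mat n)) *ᵥ U z = 0 ∧ U' z + M z *ᵥ U z = 0)) := by
  intro uσ η L M w hs
  set A := onePlusUσ ζ *ᵥ s
  have hA1 : A 1 = Complex.I * ζ * A 0 := onePlusUσ_mulVec_one ζ s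
  have hA0 : A 0 ≠ 0 := apply_zero_ne_zero_of_apply_one_eq_mul hA1 hs
  set c : ℂ := ((x 0 : ℂ) - Complex.I * x 1) * ζ - Complex.I * x 2 - x4 with hc
  refine forall₂_congr fun z hz => ?_
  have hw := hasDerivAt_cexp_smul_prod c A (hU z hz)
  have hΔ := nahmDirac_planeWave_eq_zero_iff (fun j => ![T1, T2, T3] j z) (T4 z) x x4 hc hA1 hA0
    (exp_ne_zero (-Complex.I * z * c)) (U z) (U' z)
  refine ⟨fun ⟨w', hw', hzero⟩ => ?_, fun h => ⟨_, hw, hΔ.2 h⟩⟩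
  rw [hw'.unique hw] at hzero
  exact hΔ.1 hzero

/-- Nahm's ansatz: with `û(ζ) = (i(ζ−ζ̄), ζ+ζ̄, 1−|ζ|²)/(1+|ζ|²)`,
`η = (x₂−ix₁) − 2x₃ζ − (x₂+ix₁)ζ²`, `L(ζ) = (T₁+iT₂) − 2iT₃ζ + (T₁−iT₂)ζ²`,
`M(ζ) = −T₄ − iT₃ + (T₁−iT₂)ζ`, `s` a spinor with `(1₂+û·σ)s ≠ 0` and
`w(z) = e^{−iz[(x₁−ix₂)ζ−ix₃−x₄]}·[(1₂+û·σ)s]⊗U(z)`, we have `Δw = 0` on `I` iff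
`(L(ζ)−η·1ₙ)U = 0` and `dU/dz + M(ζ)U = 0` on `I`. -/
theorem nahm_ansatz {n : ℕ} (I : Set ℝ) (T1 T2 T3 T4 : ℝ → Mat n)
    (hd1 : ∀ z ∈ I, DifferentiableAt ℝ T1 z) (hd2 : ∀ z ∈ I, DifferentiableAt ℝ T2 z)
    (hd3 : ∀ z ∈ I, DifferentiableAt ℝ T3 z) (hd4 : ∀ z ∈ I, DifferentiableAt ℝ T4 z)
    (x : Fin 3 → ℝ) (x4 : ℝ) (ζ : ℂ) (s : Fin 2 → ℂ)
    (U U' : ℝ → Fin n → ℂ) (hU : ∀ z ∈ I, HasDerivAt U (U' z) z) :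
    let uσ : Matrix (Fin 2) (Fin 2) ℂ :=
      (1 : Matrix (Fin 2) (Fin 2) ℂ) +
        (1 + ζ * (starRingEnd ℂ) ζ)⁻¹ •
          ((Complex.I * (ζ - (starRingEnd ℂ) ζ)) • σ 0
            + (ζ + (starRingEnd ℂ) ζ) • σ 1
            + (1 - ζ * (starRingEnd ℂ) ζ) • σ 2)
    let η : ℂ :=
      ((x 1 : ℂ) - Complex.I * x 0) - 2 * (x 2 : ℂ) * ζ - ((x 1 : ℂ) + Complex.I * x 0) * ζ ^ 2
    let L : ℝ → Mat n := fun z =>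
      (T1 z + Complex.I • T2 z) - (2 * Complex.I * ζ) • T3 z + ζ ^ 2 • (T1 z - Complex.I • T2 z)
    let M : ℝ → Mat n := fun z =>
      -T4 z - Complex.I • T3 z + ζ • (T1 z - Complex.I • T2 z)
    let w : ℝ → (Fin 2 × Fin n) → ℂ := fun z p =>
      Complex.exp (-Complex.I * z * (((x 0 : ℂ) - Complex.I * x 1) * ζ - Complex.I * x 2 - x4))
        * ((uσ *ᵥ s) p.1 * U z p.2)
    uσ *ᵥ s ≠ 0 →
    ((∀ z ∈ I, ∃ w' : (Fin 2 × Fin n) → ℂ, HasDerivAt w w' z ∧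
        Complex.I • w' + (x4 : ℂ) • w z
          - Complex.I • (((1 : Matrix (Fin 2) (Fin 2) ℂ) ⊗ₖ T4 z) *ᵥ w z)
          + (∑ j : Fin 3,
              σ j ⊗ₖ (![T1, T2, T3] j z + (Complex.I * (x j : ℂ)) • (1 : Mat n))) *ᵥ w z
        = 0) ↔
      (∀ z ∈ I, (L z - η • (1 : Mat n)) *ᵥ U z = 0 ∧ U' z + M z *ᵥ U z = 0)) :=
  nahm_ansatz_general I T1 T2 T3 T4 x x4 ζ s U U' hU
end
end

section
/- Let L, M : I → Mₙ(ℂ) with L differentiable and satisfying the Lax equation dL/dz = L M − M L on a real interval I. Then for every η ∈ ℂ the function z ↦ det(L(z) − η·1ₙ) is constant on I. -/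
open Matrix

noncomputable section

attribute [local instance] Matrix.normedAddCommGroup Matrix.normedSpace

/-!
Jacobi's formula `(det A)' = tr (adj A · A')` applied to `A = L - η • 1`, for which the Lax
equation reads `A' = A M - M A`. Since `adj A · A = A · adj A = det A • 1`, cyclicity of the
trace gives `tr (adj A · (A M - M A)) = det A · tr M - det A · tr M = 0`, so `det A` has zero
derivative on the interval and is constant there by the mean value inequality.
-/

namespace Matrix

variable {ι R : Type*} [Fintype ι] [DecidableEq ι] [CommRing R]

theorem det_updateCol_eq_sum_perm (A : Matrix ι ι R) (i : ι) (b : ι → R) :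
    (A.updateCol i b).det =
      ∑ σ : Equiv.Perm ι,
        ((Equiv.Perm.sign σ : ℤ) : R) * ((∏ j ∈ Finset.univ.erase i, A (σ j) j) * b (σ i)) := by
  rw [det_apply']
  refine Finset.sum_congr rfl fun σ _ => ?_
  rw [← Finset.prod_erase_mul _ _ (Finset.mem_univ i), updateCol_self]
  congr 2
  exact Finset.prod_congr rfl fun j hj => updateCol_ne (Finset.ne_of_mem_erase hj)

theorem trace_adjugate_mul_eq_sum_det_updateCol (A B : Matrix ι ι R) :
    trace (A.adjugate * B) = ∑ i, (A.updateCol i fun k => B k i).det := by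
  simp only [← cramer_apply, cramer_eq_adjugate_mulVec, trace, diag, mul_apply, mulVec,
    dotProduct]

theorem trace_adjugate_mul_commutator (A B : Matrix ι ι R) :
    trace (A.adjugate * (A * B - B * A)) = 0 := by
  rw [mul_sub, ← Matrix.mul_assoc, ← Matrix.mul_assoc, trace_sub, trace_mul_cycle A.adjugate B A,
    adjugate_mul, mul_adjugate, sub_self]

end Matrix

section Jacobi

variable {𝕜 R ι : Type*} [NontriviallyNormedField 𝕜] [NormedCommRing R] [NormedAlgebra 𝕜 R]
  [Fintype ι] [DecidableEq ι] {A : 𝕜 → Matrix ι ι R} {A' : Matrix ι ι R} {t : 𝕜}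

theorem HasDerivAt.matrix_det (hA : HasDerivAt A A' t) :
    HasDerivAt (fun t => (A t).det) (trace ((A t).adjugate * A')) t := by
  have hentry : ∀ i j, HasDerivAt (fun t => A t i j) (A' i j) t := fun i j =>
    hasDerivAt_pi.mp (hasDerivAt_pi.mp hA i) j
  simp only [det_apply']
  simp only [trace_adjugate_mul_eq_sum_det_updateCol, det_updateCol_eq_sum_perm]
  rw [Finset.sum_comm]
  refine HasDerivAt.fun_sum fun σ _ => ?_
  simpa only [smul_eq_mul, Finset.mul_sum] using
    (HasDerivAt.fun_finsetProd fun i _ => hentry (σ i) i).const_mul _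

theorem HasDerivAt.matrix_det_of_commutator {M : Matrix ι ι R}
    (hA : HasDerivAt A (A t * M - M * A t) t) : HasDerivAt (fun t => (A t).det) 0 t := by
  simpa only [trace_adjugate_mul_commutator] using hA.matrix_det

end Jacobi

theorem Set.OrdConnected.eq_of_hasDerivAt_eq_zero {E : Type*} [NormedAddCommGroup E]
    [NormedSpace ℝ E] {s : Set ℝ} (hs : s.OrdConnected) {f : ℝ → E}
    (hf : ∀ x ∈ s, HasDerivAt f 0 x) {x y : ℝ} (hx : x ∈ s) (hy : y ∈ s) : f x = f y := by
  have h := hs.convex.norm_image_sub_le_of_norm_hasDerivWithin_le (C := 0)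
    (fun z hz => (hf z hz).hasDerivWithinAt) (fun _ _ => norm_zero.le) hy hx
  rwa [zero_mul, norm_le_zero_iff, sub_eq_zero] at h

/-- if `L` satisfies the Lax equation `dL/dz = LM − ML` on a real interval `I`,
then for every `η ∈ ℂ` the function `z ↦ det(L(z) − η·1ₙ)` is constant on `I`. -/
theorem lax_preserves_char_poly {n : ℕ} (I : Set ℝ) (hI : I.OrdConnected)
    (L M : ℝ → Mat n)
    (hLax : ∀ z ∈ I, HasDerivAt L (L z * M z - M z * L z) z) :
    ∀ η : ℂ, ∀ z ∈ I, ∀ w ∈ I,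
      det (L z - η • (1 : Mat n)) = det (L w - η • (1 : Mat n)) := by
  intro η z hz w hw
  refine hI.eq_of_hasDerivAt_eq_zero (f := fun t => det (L t - η • 1)) (fun t ht => ?_) hz hw
  have hcomm : (L t - η • 1) * M t - M t * (L t - η • 1) = L t * M t - M t * L t := by
    simp only [sub_mul, mul_sub, smul_mul_assoc, mul_smul_comm, Matrix.one_mul, Matrix.mul_one]
    abel
  exact HasDerivAt.matrix_det_of_commutator (((hLax t ht).sub_const _).congr_deriv hcomm.symm)
end
end

section
/- Let L, M : I → Mₙ(ℂ) with L differentiable, let η ∈ ℂ with det(L(z) − η·1ₙ) = 0 for all z ∈ I, and suppose the adjugate satisfies d/dz adj(L − η·1ₙ) = [adj(L − η·1ₙ), M] on I. Let ν ∈ ℂⁿ and suppose there is a continuous scalar function λ : I → ℂ with adj(L(z) − η·1ₙ)·M(z)·ν = λ(z)·adj(L(z) − η·1ₙ)·ν for all z ∈ I, and let h : I → ℂ be differentiable with dh/dz = −λ·h. Then F(z) := h(z)·adj(L(z) − η·1ₙ)·ν satisfies both (L(z) − η·1ₙ)F(z) = 0 and dF/dz + M(z)F(z) = 0 on I. -/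
/-! Since `(L - η)·adj(L - η) = det(L - η)·1 = 0`, every vector in the range of the adjugate lies in
`ker(L - η)`. For the evolution, the Lax equation `adj' = adj·M - M·adj` gives
`(adj ν)' = adj M ν - M adj ν = λ·adj ν - M adj ν`, and the factor `h` with `h' = -λ h` cancels the
`λ` term, leaving `F' = -M F`. -/

open Matrix

noncomputable section

attribute [local instance] Matrix.normedAddCommGroup Matrix.normedSpace

theorem Matrix.mulVec_adjugate_mulVec_of_det_eq_zero {m R : Type*} [Fintype m] [DecidableEq m]
    [CommRing R] {A : Matrix m m R} (hA : A.det = 0) (v : m → R) :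
    A *ᵥ (A.adjugate *ᵥ v) = 0 := by
  rw [mulVec_mulVec, mul_adjugate, hA, zero_smul, zero_mulVec]

theorem HasDerivAt.mulVec_const {𝕜 𝔸 m n : Type*} [NontriviallyNormedField 𝕜] [NormedCommRing 𝔸]
    [NormedAlgebra 𝕜 𝔸] [Fintype m] [Fintype n] {A : 𝕜 → Matrix m n 𝔸} {A' : Matrix m n 𝔸} {z : 𝕜}
    (hA : HasDerivAt A A' z) (v : n → 𝔸) :
    HasDerivAt (fun w => A w *ᵥ v) (A' *ᵥ v) z :=
  hasDerivAt_pi.2 fun i => by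
    simpa only [mulVec, dotProduct] using
      HasDerivAt.fun_sum (u := Finset.univ) fun j _ =>
        (hasDerivAt_pi.1 (hasDerivAt_pi.1 hA i) j).mul_const (v j)

theorem HasDerivAt.smul_mulVec_of_lax {𝕜 𝕂 m : Type*} [NontriviallyNormedField 𝕜]
    [NontriviallyNormedField 𝕂] [NormedAlgebra 𝕜 𝕂] [Fintype m] {B : 𝕜 → Matrix m m 𝕂}
    {M : Matrix m m 𝕂} {h : 𝕜 → 𝕂} {μ : 𝕂} {ν : m → 𝕂} {z : 𝕜}
    (hB : HasDerivAt B (B z * M - M * B z) z) (hν : B z *ᵥ (M *ᵥ ν) = μ • (B z *ᵥ ν))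
    (hh : HasDerivAt h (-μ * h z) z) :
    HasDerivAt (fun w => h w • (B w *ᵥ ν)) (-(M *ᵥ (h z • (B z *ᵥ ν)))) z := by
  refine (hh.smul (hB.mulVec_const ν)).congr_deriv ?_
  rw [sub_mulVec, ← mulVec_mulVec, ← mulVec_mulVec, hν, mulVec_smul, smul_sub, mul_smul,
    smul_comm (h z) μ, neg_smul]
  abel

theorem direct_integration_eigenvector_general {n : ℕ} (I : Set ℝ) (L M : ℝ → Mat n)
    (η : ℂ) (hdet : ∀ z ∈ I, det (L z - η • (1 : Mat n)) = 0)
    (hAdj : ∀ z ∈ I, HasDerivAt (fun w => (L w - η • (1 : Mat n)).adjugate)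
      ((L z - η • (1 : Mat n)).adjugate * M z - M z * (L z - η • (1 : Mat n)).adjugate) z)
    (ν : Fin n → ℂ) (lam : ℝ → ℂ)
    (heig : ∀ z ∈ I, (L z - η • (1 : Mat n)).adjugate *ᵥ (M z *ᵥ ν)
      = lam z • ((L z - η • (1 : Mat n)).adjugate *ᵥ ν))
    (h : ℝ → ℂ) (hh : ∀ z ∈ I, HasDerivAt h (-(lam z) * h z) z) :
    let Fv : ℝ → Fin n → ℂ := fun z => h z • ((L z - η • (1 : Mat n)).adjugate *ᵥ ν)
    ∀ z ∈ I, (L z - η • (1 : Mat n)) *ᵥ Fv z = 0 ∧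
      HasDerivAt Fv (-(M z *ᵥ Fv z)) z := by
  intro Fv z hz
  refine ⟨?_, (hAdj z hz).smul_mulVec_of_lax (heig z hz) (hh z hz)⟩
  rw [mulVec_smul, mulVec_adjugate_mulVec_of_det_eq_zero (hdet z hz), smul_zero]

/-- direct integration of the Lax equations: if `det(L − η·1ₙ) = 0` on `I`, the
adjugate evolves by `d/dz adj(L − η·1ₙ) = [adj(L − η·1ₙ), M]`, `ν ∈ ℂⁿ`, a continuous scalar `λ`
satisfies `adj(L − η)·M·ν = λ·adj(L − η)·ν`, and `dh/dz = −λ·h`, then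
`F := h·adj(L − η·1ₙ)·ν` satisfies `(L − η·1ₙ)F = 0` and `dF/dz + M·F = 0` on `I`. -/
theorem direct_integration_eigenvector {n : ℕ} (I : Set ℝ) (L M : ℝ → Mat n)
    (hL : ∀ z ∈ I, DifferentiableAt ℝ L z)
    (η : ℂ) (hdet : ∀ z ∈ I, det (L z - η • (1 : Mat n)) = 0)
    (hAdj : ∀ z ∈ I, HasDerivAt (fun w => (L w - η • (1 : Mat n)).adjugate)
      ((L z - η • (1 : Mat n)).adjugate * M z - M z * (L z - η • (1 : Mat n)).adjugate) z)
    (ν : Fin n → ℂ) (lam : ℝ → ℂ) (hlam : ContinuousOn lam I)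
    (heig : ∀ z ∈ I, (L z - η • (1 : Mat n)).adjugate *ᵥ (M z *ᵥ ν)
      = lam z • ((L z - η • (1 : Mat n)).adjugate *ᵥ ν))
    (h : ℝ → ℂ) (hh : ∀ z ∈ I, HasDerivAt h (-(lam z) * h z) z) :
    let Fv : ℝ → Fin n → ℂ := fun z => h z • ((L z - η • (1 : Mat n)).adjugate *ᵥ ν)
    ∀ z ∈ I, (L z - η • (1 : Mat n)) *ᵥ Fv z = 0 ∧
      HasDerivAt Fv (-(M z *ᵥ Fv z)) z :=
  direct_integration_eigenvector_general I L M η hdet hAdj ν lam heig h hh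
end
end

section
/- Let M_N, M_S : I → Mₙ(ℂ) be continuous with M_S(z)† = −M_N(z) for all z ∈ I, and let U_N, U_S : I → Mₙ(ℂ) be differentiable with dU_N/dz = −M_N U_N and dU_S/dz = −M_S U_S. Then D(z) := U_N(z)† U_S(z) is constant on I. If moreover L_N, L_S : I → Mₙ(ℂ) satisfy L_S(z)† = −L_N(z), and there are constant diagonal matrices D_N, D_S with L_N U_N = U_N D_N, L_S U_S = U_S D_S, −D_N† = D_S, and the diagonal entries of D_S are pairwise distinct, then D is a diagonal matrix. -/
open Matrix

noncomputable section

attribute [local instance] Matrix.normedAddCommGroup Matrix.normedSpace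

/-!
Since `M_Nᴴ = -M_S`, the product rule gives `(U_Nᴴ U_S)' = -U_Nᴴ M_Nᴴ U_S - U_Nᴴ M_S U_S = 0`,
so the pairing is constant on the interval. The reality condition on `L` turns
`L_N U_N = U_N D_N` into `U_Nᴴ L_S = D_S U_Nᴴ`, hence the pairing commutes with `D_S`; a matrix
commuting with a diagonal matrix with distinct entries is diagonal.
-/

theorem Convex.is_const_of_hasDerivWithinAt_zero {E : Type*} [NormedAddCommGroup E]
    [NormedSpace ℝ E] {f : ℝ → E} {s : Set ℝ} (hs : Convex ℝ s)
    (hf : ∀ x ∈ s, HasDerivWithinAt f 0 s x) {x y : ℝ} (hx : x ∈ s) (hy : y ∈ s) :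
    f x = f y := by
  have h := hs.norm_image_sub_le_of_norm_hasDerivWithin_le hf
    (fun _ _ => (norm_zero (E := E)).le) hy hx
  rw [zero_mul] at h
  exact sub_eq_zero.mp (norm_le_zero_iff.mp h)

namespace Matrix

variable {m k l : Type*} [Fintype m] [Fintype k] [Fintype l]

theorem hasDerivAt_conjTranspose_mul {A : ℝ → Matrix m k ℂ} {B : ℝ → Matrix m l ℂ}
    {A' : Matrix m k ℂ} {B' : Matrix m l ℂ} {x : ℝ}
    (hA : HasDerivAt A A' x) (hB : HasDerivAt B B' x) :
    HasDerivAt (fun z => (A z)ᴴ * B z) (A'ᴴ * B x + (A x)ᴴ * B') x := by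
  have hA' (a : m) (i : k) : HasDerivAt (fun z => A z a i) (A' a i) x :=
    hasDerivAt_pi.mp (hasDerivAt_pi.mp hA a) i
  have hB' (a : m) (j : l) : HasDerivAt (fun z => B z a j) (B' a j) x :=
    hasDerivAt_pi.mp (hasDerivAt_pi.mp hB a) j
  refine hasDerivAt_pi.mpr fun i => hasDerivAt_pi.mpr fun j => ?_
  simp only [add_apply, mul_apply, conjTranspose_apply, ← Finset.sum_add_distrib]
  exact HasDerivAt.fun_sum fun a _ => (hA' a i).star.mul (hB' a j)

theorem isDiag_of_commute_diagonal [DecidableEq m] {R : Type*} [CommRing R] [NoZeroDivisors R]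
    {D : Matrix m m R} {d : m → R} (hd : Function.Injective d) (h : Commute D (diagonal d)) :
    D.IsDiag := by
  intro i j hij
  have hij' : D i j * d j = d i * D i j := by
    simpa only [mul_diagonal, diagonal_mul] using congr_fun₂ h.eq i j
  have : D i j * (d j - d i) = 0 := by linear_combination hij'
  exact (mul_eq_zero.mp this).resolve_right (sub_ne_zero.mpr (hd.ne hij).symm)

end Matrix

section Pairing

variable {m k l : Type*} [Fintype m] [Fintype k] [Fintype l]

theorem conjTranspose_mul_eq_of_hasDerivAt {I : Set ℝ} (hI : I.OrdConnected)
    {MN MS : ℝ → Matrix m m ℂ} (hreal : ∀ z ∈ I, (MS z)ᴴ = -MN z)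
    {UN : ℝ → Matrix m k ℂ} {US : ℝ → Matrix m l ℂ}
    (hUN : ∀ z ∈ I, HasDerivAt UN (-(MN z * UN z)) z)
    (hUS : ∀ z ∈ I, HasDerivAt US (-(MS z * US z)) z) {z w : ℝ} (hz : z ∈ I) (hw : w ∈ I) :
    (UN z)ᴴ * US z = (UN w)ᴴ * US w := by
  refine (hI.convex (𝕜 := ℝ)).is_const_of_hasDerivWithinAt_zero
    (f := fun z => (UN z)ᴴ * US z) (fun x hx => ?_) hz hw
  have hMN : MN x = -(MS x)ᴴ := by rw [hreal x hx, neg_neg]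
  convert (Matrix.hasDerivAt_conjTranspose_mul (hUN x hx) (hUS x hx)).hasDerivWithinAt using 1
  simp only [hMN, Matrix.neg_mul, neg_neg, conjTranspose_mul, conjTranspose_conjTranspose,
    Matrix.mul_neg, Matrix.mul_assoc, add_neg_cancel]

theorem commute_conjTranspose_mul_of_intertwining {LN LS : Matrix m m ℂ} {UN US : Matrix m k ℂ}
    {DN DS : Matrix k k ℂ} (hL : LSᴴ = -LN) (hN : LN * UN = UN * DN) (hS : LS * US = US * DS) (hD : -DNᴴ = DS) :
    Commute (UNᴴ * US) DS := by
  have hLS : UNᴴ * LS = DS * UNᴴ := by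
    rw [← conjTranspose_conjTranspose LS, ← conjTranspose_mul, hL, Matrix.neg_mul, hN,
      conjTranspose_neg, conjTranspose_mul, ← Matrix.neg_mul, hD]
  calc UNᴴ * US * DS = UNᴴ * LS * US := by rw [Matrix.mul_assoc, ← hS, Matrix.mul_assoc]
    _ = DS * (UNᴴ * US) := by rw [hLS, Matrix.mul_assoc]

end Pairing

theorem pairing_constant_and_diagonal_general {n : ℕ} (I : Set ℝ) (hI : I.OrdConnected)
    (MN MS : ℝ → Mat n)
    (hreal : ∀ z ∈ I, (MS z)ᴴ = -MN z)
    (UN US : ℝ → Mat n)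
    (hUN : ∀ z ∈ I, HasDerivAt UN (-(MN z * UN z)) z)
    (hUS : ∀ z ∈ I, HasDerivAt US (-(MS z * US z)) z) :
    (∀ z ∈ I, ∀ w ∈ I, (UN z)ᴴ * US z = (UN w)ᴴ * US w) ∧
    (∀ LN LS : ℝ → Mat n, (∀ z ∈ I, (LS z)ᴴ = -LN z) →
      ∀ DN DS : Mat n, DN.IsDiag → DS.IsDiag →
        (∀ z ∈ I, LN z * UN z = UN z * DN) →
        (∀ z ∈ I, LS z * US z = US z * DS) →
        -DNᴴ = DS →
        (∀ i j : Fin n, i ≠ j → DS i i ≠ DS j j) →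
        ∀ z ∈ I, ((UN z)ᴴ * US z).IsDiag) := by
  refine ⟨fun z hz w hw => conjTranspose_mul_eq_of_hasDerivAt hI hreal hUN hUS hz hw, ?_⟩
  intro LN LS hL DN DS _ hDS hN hS hD hdist z hz
  have hcomm := commute_conjTranspose_mul_of_intertwining (hL z hz) (hN z hz) (hS z hz) hD
  rw [← hDS.diagonal_diag] at hcomm
  exact isDiag_of_commute_diagonal (fun i j hij => by_contra fun hne => hdist i j hne hij) hcomm

/-- with `M_S† = −M_N` and `U_N' = −M_N U_N`, `U_S' = −M_S U_S`, the pairing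
`D(z) = U_N(z)† U_S(z)` is constant on the interval `I`; and if additionally `L_S† = −L_N`,
`L_N U_N = U_N D_N`, `L_S U_S = U_S D_S` with constant diagonal `D_N, D_S`, `−D_N† = D_S`, and
the diagonal entries of `D_S` pairwise distinct, then `D` is diagonal. -/
theorem pairing_constant_and_diagonal {n : ℕ} (I : Set ℝ) (hI : I.OrdConnected)
    (MN MS : ℝ → Mat n) (hMN : ContinuousOn MN I) (hMS : ContinuousOn MS I)
    (hreal : ∀ z ∈ I, (MS z)ᴴ = -MN z)
    (UN US : ℝ → Mat n)
    (hUN : ∀ z ∈ I, HasDerivAt UN (-(MN z * UN z)) z)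
    (hUS : ∀ z ∈ I, HasDerivAt US (-(MS z * US z)) z) :
    (∀ z ∈ I, ∀ w ∈ I, (UN z)ᴴ * US z = (UN w)ᴴ * US w) ∧
    (∀ LN LS : ℝ → Mat n, (∀ z ∈ I, (LS z)ᴴ = -LN z) →
      ∀ DN DS : Mat n, DN.IsDiag → DS.IsDiag →
        (∀ z ∈ I, LN z * UN z = UN z * DN) →
        (∀ z ∈ I, LS z * US z = US z * DS) →
        -DNᴴ = DS →
        (∀ i j : Fin n, i ≠ j → DS i i ≠ DS j j) →
        ∀ z ∈ I, ((UN z)ᴴ * US z).IsDiag) :=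
  pairing_constant_and_diagonal_general I hI MN MS hreal UN US hUN hUS
end
end
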